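/- arXiv:1607.03035 — 2 statements merged into one kernel-verified Lean document; each statement's English description precedes it below -/
import Mathlib

section
/- Let p > 1 and let (ξ_n)_{n≥1} be a sequence of real random variables with τ_{φ_p}(ξ_n) < ∞ for each n. Suppose there exist positive constants c and α such that for every natural number n, τ_{φ_p}(∑_{i=1}^n ξ_i) ≤ c·n^{1−α}. Then for every ε > 0 the series ∑_{n=1}^∞ P(|∑_{i=1}^n ξ_i| ≥ nε) converges; i.e., n^{−1} ∑_{i=1}^n ξ_i converges to 0 completely. -/
open MeasureTheory Real Filter

/-- The quadratic `N`-function `φ_p`: `φ_p(x) = x²/2` for `|x| ≤ 1` and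
`φ_p(x) = (1/p)|x|^p - 1/p + 1/2` for `|x| > 1`. -/
noncomputable def phi (p : ℝ) (x : ℝ) : ℝ :=
  if |x| ≤ 1 then x ^ 2 / 2 else (1 / p) * |x| ^ p - 1 / p + 1 / 2

/-- The set of admissible constants in the definition of the `φ`-subgaussian standard:
`{a ≥ 0 : ∀ λ, ln E exp(λξ) ≤ φ(aλ)}` (the exponentiated form of the inequality also
encodes finiteness of `E exp(λξ)`). -/
def subSet {Ω : Type*} [MeasurableSpace Ω] (μ : Measure Ω) (φ : ℝ → ℝ) (ξ : Ω → ℝ) :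
    Set ℝ :=
  {a | 0 ≤ a ∧ ∀ l : ℝ,
    ∫⁻ ω, ENNReal.ofReal (Real.exp (l * ξ ω)) ∂μ ≤ ENNReal.ofReal (Real.exp (φ (a * l)))}

/-- The `φ`-subgaussian standard (norm) `τ_φ(ξ)`. -/
noncomputable def tau {Ω : Type*} [MeasurableSpace Ω] (μ : Measure Ω) (φ : ℝ → ℝ)
    (ξ : Ω → ℝ) : ℝ :=
  sInf (subSet μ φ ξ)

/-!
Chernoff's bound turns `a ∈ subSet μ φ_p ξ` into `P(|ξ| ≥ t) ≤ 2 exp(1/2 - (1 - 1/p) (t/a)^q)`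
with `q = p/(p-1)`, because `φ_p(s) ≤ s^p/p + 1/2` and the choice `s = (t/a)^(1/(p-1))` makes
`s^p = s · t/a = (t/a)^q`. As `φ_p` is even and increasing on `[0, ∞)`, the admissible constants
form an up-set, so `τ_{φ_p}(S_n) ≤ c n^(1-α)` puts `a = 2c n^(1-α)` among them; with `t = nε`
the `n`-th term is at most `2 e^(1/2) exp(-κ n^(αq))` for some `κ > 0`, which is summable.
-/

section Phi

variable {p : ℝ}

theorem even_phi (p : ℝ) : Function.Even (phi p) := by
  intro x
  simp [phi, abs_neg]

theorem phi_abs (p x : ℝ) : phi p |x| = phi p x := by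
  simp [phi]

theorem monotoneOn_phi (hp : 0 ≤ p) : MonotoneOn (phi p) (Set.Ici 0) := by
  intro a ha b hb hab
  simp only [Set.mem_Ici] at ha hb
  have hp' : 0 ≤ 1 / p := by positivity
  unfold phi
  rw [abs_of_nonneg ha, abs_of_nonneg hb]
  split_ifs with ha1 hb1 hb1
  · nlinarith
  · have hbp : 1 ≤ b ^ p := Real.one_le_rpow (le_of_not_ge hb1) hp
    nlinarith
  · linarith
  · have := Real.rpow_le_rpow ha hab hp
    nlinarith

theorem phi_le_abs_rpow_div_add_half (hp : 0 ≤ p) (x : ℝ) : phi p x ≤ |x| ^ p / p + 1 / 2 := by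
  have hx : 0 ≤ |x| ^ p / p := by positivity
  unfold phi
  split_ifs with hx1
  · nlinarith [sq_abs x, abs_nonneg x]
  · have : 0 ≤ 1 / p := by positivity
    linarith [div_eq_mul_one_div (|x| ^ p) p]

theorem phi_rpow_sub_mul_le (hp : 1 < p) {u : ℝ} (hu : 0 ≤ u) :
    phi p (u ^ (1 / (p - 1))) - u ^ (1 / (p - 1)) * u ≤
      1 / 2 - (1 - 1 / p) * u ^ (p / (p - 1)) := by
  have hp1 : 0 < p - 1 := by linarith
  have hs : 0 ≤ u ^ (1 / (p - 1)) := Real.rpow_nonneg hu _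
  have hpow : (u ^ (1 / (p - 1))) ^ p = u ^ (p / (p - 1)) := by
    rw [← Real.rpow_mul hu, one_div_mul_eq_div]
  have hmul : u ^ (1 / (p - 1)) * u = u ^ (p / (p - 1)) := by
    nth_rewrite 2 [← Real.rpow_one u]
    rw [← Real.rpow_add' hu (add_pos (by positivity) one_pos).ne']
    congr 1
    field_simp
    ring
  have hphi := phi_le_abs_rpow_div_add_half (zero_lt_one.trans hp).le (u ^ (1 / (p - 1)))
  rw [abs_of_nonneg hs, hpow] at hphi
  rw [hmul]
  have : u ^ (p / (p - 1)) / p = 1 / p * u ^ (p / (p - 1)) := by ring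
  linarith

end Phi

section SubgaussianTail

variable {Ω : Type*} [MeasurableSpace Ω] {μ : Measure Ω} {p a b t : ℝ} {ξ : Ω → ℝ}

theorem mem_subSet_phi_of_le (hp : 0 ≤ p) (ha : a ∈ subSet μ (phi p) ξ) (hab : a ≤ b) :
    b ∈ subSet μ (phi p) ξ := by
  obtain ⟨ha0, hal⟩ := ha
  have hb0 : 0 ≤ b := ha0.trans hab
  refine ⟨hb0, fun l => (hal l).trans (ENNReal.ofReal_le_ofReal (Real.exp_le_exp.mpr ?_))⟩
  rw [← phi_abs p (a * l), ← phi_abs p (b * l)]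
  refine monotoneOn_phi hp (Set.mem_Ici.mpr (abs_nonneg _)) (Set.mem_Ici.mpr (abs_nonneg _)) ?_
  rw [abs_mul, abs_mul, abs_of_nonneg ha0, abs_of_nonneg hb0]
  exact mul_le_mul_of_nonneg_right hab (abs_nonneg l)

theorem mem_subSet_phi_of_tau_lt (hp : 0 ≤ p) (hne : (subSet μ (phi p) ξ).Nonempty)
    (hb : tau μ (phi p) ξ < b) : b ∈ subSet μ (phi p) ξ :=
  let ⟨_, ha, hab⟩ := exists_lt_of_csInf_lt hne hb
  mem_subSet_phi_of_le hp ha hab.le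

theorem mem_subSet_neg {φ : ℝ → ℝ} (hφ : Function.Even φ) (ha : a ∈ subSet μ φ ξ) :
    a ∈ subSet μ φ (fun ω => -ξ ω) := by
  refine ⟨ha.1, fun l => ?_⟩
  simpa [mul_neg, neg_mul, hφ (a * l)] using ha.2 (-l)

theorem measure_ge_le_exp_of_mem_subSet {φ : ℝ → ℝ} (hξ : Measurable ξ) (ha : a ∈ subSet μ φ ξ)
    {l : ℝ} (hl : 0 ≤ l) (t : ℝ) :
    μ {ω | t ≤ ξ ω} ≤ ENNReal.ofReal (exp (φ (a * l) - l * t)) := by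
  have hsub : {ω | t ≤ ξ ω} ⊆
      {ω | ENNReal.ofReal (exp (l * t)) ≤ ENNReal.ofReal (exp (l * ξ ω))} := fun ω hω =>
    ENNReal.ofReal_le_ofReal (exp_le_exp.mpr (mul_le_mul_of_nonneg_left hω hl))
  calc μ {ω | t ≤ ξ ω}
      ≤ (∫⁻ ω, ENNReal.ofReal (exp (l * ξ ω)) ∂μ) / ENNReal.ofReal (exp (l * t)) :=
        (measure_mono hsub).trans (meas_ge_le_lintegral_div
          (hξ.const_mul l).exp.ennreal_ofReal.aemeasurable (by simp [exp_pos])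
          ENNReal.ofReal_ne_top)
    _ ≤ ENNReal.ofReal (exp (φ (a * l))) / ENNReal.ofReal (exp (l * t)) := by gcongr; exact ha.2 l
    _ = ENNReal.ofReal (exp (φ (a * l) - l * t)) := by
        rw [← ENNReal.ofReal_div_of_pos (exp_pos _), exp_sub]

theorem measure_ge_le_of_mem_subSet_phi (hp : 1 < p) (hξ : Measurable ξ)
    (ha : a ∈ subSet μ (phi p) ξ) (ha0 : 0 < a) (ht : 0 ≤ t) :
    μ {ω | t ≤ ξ ω} ≤ ENNReal.ofReal (exp (1 / 2 - (1 - 1 / p) * (t / a) ^ (p / (p - 1)))) := by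
  have hu : 0 ≤ t / a := div_nonneg ht ha0.le
  set s := (t / a) ^ (1 / (p - 1))
  refine (measure_ge_le_exp_of_mem_subSet hξ ha (l := s / a) (by positivity) t).trans ?_
  have hs : a * (s / a) = s := mul_div_cancel₀ s ha0.ne'
  have hst : s / a * t = s * (t / a) := by ring
  rw [hs, hst]
  exact ENNReal.ofReal_le_ofReal (exp_le_exp.mpr (phi_rpow_sub_mul_le hp hu))

theorem measure_abs_ge_le_of_mem_subSet_phi (hp : 1 < p) (hξ : Measurable ξ)
    (ha : a ∈ subSet μ (phi p) ξ) (ha0 : 0 < a) (ht : 0 ≤ t) :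
    μ {ω | t ≤ |ξ ω|} ≤
      ENNReal.ofReal (2 * exp (1 / 2 - (1 - 1 / p) * (t / a) ^ (p / (p - 1)))) := by
  have hunion : {ω | t ≤ |ξ ω|} = {ω | t ≤ ξ ω} ∪ {ω | t ≤ -ξ ω} :=
    Set.ext fun ω => le_abs (a := t) (b := ξ ω)
  rw [hunion, ENNReal.ofReal_mul zero_le_two, ENNReal.ofReal_ofNat, two_mul]
  exact (measure_union_le _ _).trans (add_le_add
    (measure_ge_le_of_mem_subSet_phi hp hξ ha ha0 ht)
    (measure_ge_le_of_mem_subSet_phi hp hξ.neg (mem_subSet_neg (even_phi p) ha) ha0 ht))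

theorem measure_abs_ge_le_of_tau_le (hp : 1 < p) (hξ : Measurable ξ)
    (hne : (subSet μ (phi p) ξ).Nonempty) {C : ℝ} (hC : 0 < C) (hτ : tau μ (phi p) ξ ≤ C)
    (ht : 0 ≤ t) :
    μ {ω | t ≤ |ξ ω|} ≤
      ENNReal.ofReal (2 * exp (1 / 2 - (1 - 1 / p) * (t / (2 * C)) ^ (p / (p - 1)))) :=
  measure_abs_ge_le_of_mem_subSet_phi hp hξ
    (mem_subSet_phi_of_tau_lt (zero_lt_one.trans hp).le hne (by linarith)) (by positivity) ht

end SubgaussianTail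

theorem summable_exp_neg_mul_rpow {k β : ℝ} (hk : 0 < k) (hβ : 0 < β) :
    Summable fun n : ℕ => exp (-(k * (n : ℝ) ^ β)) := by
  have hpow : Tendsto (fun n : ℕ => (n : ℝ) ^ β) atTop atTop :=
    (tendsto_rpow_atTop hβ).comp tendsto_natCast_atTop_atTop
  have ho := (isLittleO_exp_neg_mul_rpow_atTop hk (-2 / β)).comp_tendsto hpow
  refine summable_of_isBigO_nat (Real.summable_nat_rpow.mpr (by norm_num : (-2 : ℝ) < -1)) ?_
  refine ho.isBigO.congr (fun n => by simp [neg_mul]) (fun n => ?_)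
  simp only [Function.comp]
  rw [← rpow_mul (Nat.cast_nonneg n), mul_div_cancel₀ _ hβ.ne']

theorem complete_convergence_phi_subgaussian_general
    {Ω : Type*} [MeasurableSpace Ω] (μ : Measure Ω)
    (p : ℝ) (hp : 1 < p)
    (ξ : ℕ → Ω → ℝ) (hmeas : ∀ n, Measurable (ξ n))
    (hsubsum : ∀ n : ℕ, 1 ≤ n → (subSet μ (phi p) (fun ω => ∑ i ∈ Finset.Icc 1 n, ξ i ω)).Nonempty)
    (c α : ℝ) (hc : 0 < c) (hα : 0 < α)
    (hτ : ∀ n : ℕ, 1 ≤ n →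
      tau μ (phi p) (fun ω => ∑ i ∈ Finset.Icc 1 n, ξ i ω) ≤ c * (n : ℝ) ^ ((1 : ℝ) - α))
    (ε : ℝ) (hε : 0 < ε) :
    (∑' n : ℕ,
      μ {ω | ((n + 1 : ℕ) : ℝ) * ε ≤ |∑ i ∈ Finset.Icc 1 (n + 1), ξ i ω|}) < ⊤ := by
  have hq : 0 < p / (p - 1) := div_pos (by linarith) (by linarith)
  have hκ : 0 < 1 - 1 / p := by rw [sub_pos, div_lt_one (by linarith)]; exact hp
  set k := (1 - 1 / p) * (ε / (2 * c)) ^ (p / (p - 1))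
  have hterm : ∀ n : ℕ,
      μ {ω | ((n + 1 : ℕ) : ℝ) * ε ≤ |∑ i ∈ Finset.Icc 1 (n + 1), ξ i ω|} ≤
        ENNReal.ofReal
          (2 * exp (1 / 2) * exp (-(k * ((n + 1 : ℕ) : ℝ) ^ (α * (p / (p - 1)))))) := by
    intro n
    set m := n + 1
    have hm : (0 : ℝ) < m := by positivity
    have hratio : m * ε / (2 * (c * (m : ℝ) ^ (1 - α))) = ε / (2 * c) * (m : ℝ) ^ α := by
      rw [Real.rpow_sub hm, Real.rpow_one]
      field_simp
    refine (measure_abs_ge_le_of_tau_le hp (Finset.measurable_sum _ fun i _ => hmeas i)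
      (hsubsum m (by omega)) (by positivity) (hτ m (by omega)) (by positivity)).trans
      (ENNReal.ofReal_le_ofReal (le_of_eq ?_))
    rw [hratio, Real.mul_rpow (by positivity) (by positivity), ← Real.rpow_mul hm.le, mul_assoc,
      ← exp_add]
    simp only [k]
    ring_nf
  have hsum : Summable fun n : ℕ =>
      2 * exp (1 / 2) * exp (-(k * ((n + 1 : ℕ) : ℝ) ^ (α * (p / (p - 1))))) :=
    ((summable_nat_add_iff 1).mpr
      (summable_exp_neg_mul_rpow (by positivity) (by positivity))).mul_left _
  exact (ENNReal.tsum_le_tsum hterm).trans_lt hsum.tsum_ofReal_lt_top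

/-- Complete convergence: under `τ_{φ_p}(∑_{i=1}^n ξ_i) ≤ c·n^{1−α}`, for every `ε > 0`
the series `∑_{n=1}^∞ P(|∑_{i=1}^n ξ_i| ≥ nε)` converges, i.e. `n⁻¹ ∑_{i=1}^n ξ_i → 0`
completely. -/
theorem complete_convergence_phi_subgaussian
    {Ω : Type*} [MeasurableSpace Ω] (μ : Measure Ω) [IsProbabilityMeasure μ]
    (p : ℝ) (hp : 1 < p)
    (ξ : ℕ → Ω → ℝ) (hmeas : ∀ n, Measurable (ξ n))
    (hsub : ∀ n, (subSet μ (phi p) (ξ n)).Nonempty)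
    (hsubsum : ∀ n : ℕ, 1 ≤ n → (subSet μ (phi p) (fun ω => ∑ i ∈ Finset.Icc 1 n, ξ i ω)).Nonempty)
    (c α : ℝ) (hc : 0 < c) (hα : 0 < α)
    (hτ : ∀ n : ℕ, 1 ≤ n →
      tau μ (phi p) (fun ω => ∑ i ∈ Finset.Icc 1 n, ξ i ω) ≤ c * (n : ℝ) ^ ((1 : ℝ) - α))
    (ε : ℝ) (hε : 0 < ε) :
    (∑' n : ℕ,
      μ {ω | ((n + 1 : ℕ) : ℝ) * ε ≤ |∑ i ∈ Finset.Icc 1 (n + 1), ξ i ω|}) < ⊤ :=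
  complete_convergence_phi_subgaussian_general μ p hp ξ hmeas hsubsum c α hc hα hτ ε hε
end

section
/- Let p > 1, q > 1 with 1/p + 1/q = 1, set r = min{p, 2}, and let (ξ_n)_{n≥1} be a sequence of real random variables with b = sup_{n≥1} τ_{φ_p}(ξ_n) < ∞, b > 0. Suppose that for every natural number n, τ_{φ_p}(∑_{i=1}^n ξ_i)^r ≤ ∑_{i=1}^n τ_{φ_p}(ξ_i)^r. Then for every s with 0 < s < r, every ε > 0 and every natural number n with n > (b/ε)^{(1/s − 1/r)^{−1}}, P(|∑_{i=1}^n ξ_i| ≥ n^{1/s} ε) ≤ 2 exp(−(n^{q(1/s − 1/r)} (1/q) (ε/b)^q − 1/q + 1/2)). -/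
open MeasureTheory Real Filter

/-! Chernoff's bound with the Legendre transform of `φ_p`: for `u ≥ 1` and `1/p + 1/q = 1`,
`sup_λ (λu − φ_p(λ)) = u^q/q − 1/q + 1/2`, attained at `λ = u^{q−1}`. If `a` is admissible for
`S`, this gives `P(|S| ≥ u a) ≤ 2 exp(−(u^q/q − 1/q + 1/2))`. For `S = ξ_1 + ⋯ + ξ_n` the norm
inequality makes `a = n^{1/r} b` admissible, and `u = n^{1/s} ε / a = n^{1/s − 1/r} ε / b`
exceeds `1` exactly when `n > (b/ε)^{(1/s − 1/r)⁻¹}`. -/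

section Phi

variable {p : ℝ}

lemma phi_neg (p x : ℝ) : phi p (-x) = phi p x := by
  simp [phi]

lemma phi_le_phi (hp : 0 < p) {x y : ℝ} (h : |x| ≤ |y|) : phi p x ≤ phi p y := by
  unfold phi
  by_cases hy : |y| ≤ 1
  · rw [if_pos (h.trans hy), if_pos hy]
    have : x ^ 2 ≤ y ^ 2 := sq_le_sq.mpr h
    linarith
  rw [if_neg hy]
  push Not at hy
  have hy1 : 1 / p * 1 ≤ 1 / p * |y| ^ p := by gcongr; exact one_le_rpow hy.le hp.le
  by_cases hx : |x| ≤ 1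
  · rw [if_pos hx]
    have : x ^ 2 ≤ 1 := by rw [← sq_abs]; exact pow_le_one₀ (abs_nonneg x) hx
    linarith
  · rw [if_neg hx]
    have : 1 / p * |x| ^ p ≤ 1 / p * |y| ^ p := by gcongr
    linarith

lemma continuous_phi (hp : 0 < p) : Continuous (phi p) := by
  refine Continuous.if_le (by fun_prop) ?_ continuous_abs continuous_const fun x hx => ?_
  · exact ((continuous_const.mul (continuous_abs.rpow_const fun _ => Or.inr hp.le)).sub
      continuous_const).add continuous_const
  · rw [← sq_abs, hx, one_rpow]
    ring

lemma phi_rpow_sub_one_sub_mul {q : ℝ} (hpq : p.HolderConjugate q) {u : ℝ} (hu : 1 < u) :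
    phi p (u ^ (q - 1)) - u ^ (q - 1) * u = -(u ^ q * (1 / q) - 1 / q + 1 / 2) := by
  have hu0 : 0 < u := one_pos.trans hu
  have hv : 1 < u ^ (q - 1) := one_lt_rpow hu (by linarith [hpq.symm.lt])
  have hvp : (u ^ (q - 1)) ^ p = u ^ q := by
    rw [← rpow_mul hu0.le, hpq.symm.sub_one_mul_conj]
  have hvu : u ^ (q - 1) * u = u ^ q := by
    rw [← rpow_add_one hu0.ne', sub_add_cancel]
  have h1p : 1 / p = 1 - 1 / q := by rw [one_div, one_div, ← hpq.one_sub_inv, sub_sub_cancel]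
  rw [phi, if_neg (by rw [abs_of_pos (one_pos.trans hv)]; exact hv.not_ge),
    abs_of_pos (one_pos.trans hv), hvp, hvu, h1p]
  ring

end Phi

section SubSet

variable {Ω : Type*} [MeasurableSpace Ω] {μ : Measure Ω} {p : ℝ} {ξ : Ω → ℝ} {a : ℝ}

lemma tau_nonneg (φ : ℝ → ℝ) (ξ : Ω → ℝ) : 0 ≤ tau μ φ ξ :=
  Real.sInf_nonneg fun _ ha => ha.1

lemma isClosed_subSet (hp : 0 < p) (ξ : Ω → ℝ) : IsClosed (subSet μ (phi p) ξ) := by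
  have : subSet μ (phi p) ξ = Set.Ici 0 ∩ ⋂ l : ℝ,
      {a | ∫⁻ ω, ENNReal.ofReal (exp (l * ξ ω)) ∂μ ≤ ENNReal.ofReal (exp (phi p (a * l)))} := by
    ext a
    simp [subSet]
  rw [this]
  refine isClosed_Ici.inter (isClosed_iInter fun l => isClosed_le continuous_const ?_)
  exact ENNReal.continuous_ofReal.comp
    (continuous_exp.comp ((continuous_phi hp).comp (continuous_mul_const l)))

lemma tau_mem_subSet (hp : 0 < p) (h : (subSet μ (phi p) ξ).Nonempty) :
    tau μ (phi p) ξ ∈ subSet μ (phi p) ξ :=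
  (isClosed_subSet hp ξ).csInf_mem h ⟨0, fun _ ha => ha.1⟩

lemma mem_subSet_of_le (hp : 0 < p) (ha : a ∈ subSet μ (phi p) ξ) {a' : ℝ} (h : a ≤ a') :
    a' ∈ subSet μ (phi p) ξ := by
  refine ⟨ha.1.trans h, fun l => (ha.2 l).trans ?_⟩
  gcongr
  refine phi_le_phi hp ?_
  rw [abs_mul, abs_mul, abs_of_nonneg ha.1, abs_of_nonneg (ha.1.trans h)]
  gcongr

lemma mem_subSet_neg_s8 (ha : a ∈ subSet μ (phi p) ξ) : a ∈ subSet μ (phi p) (-ξ) := by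
  refine ⟨ha.1, fun l => ?_⟩
  simpa [mul_neg, neg_mul, phi_neg] using ha.2 (-l)

end SubSet

section Tail

variable {Ω : Type*} [MeasurableSpace Ω] {μ : Measure Ω} {S : Ω → ℝ}

lemma measure_le_le_exp_of_lintegral_exp_le (hS : Measurable S) {l t C : ℝ} (hl : 0 < l)
    (h : ∫⁻ ω, ENNReal.ofReal (exp (l * S ω)) ∂μ ≤ ENNReal.ofReal (exp C)) :
    μ {ω | t ≤ S ω} ≤ ENNReal.ofReal (exp (C - l * t)) := by
  have hmarkov := mul_meas_ge_le_lintegral₀ (by fun_prop : AEMeasurable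
    (fun ω => ENNReal.ofReal (exp (l * S ω))) μ) (ENNReal.ofReal (exp (l * t)))
  have hsub : {ω | t ≤ S ω} ⊆
      {ω | ENNReal.ofReal (exp (l * t)) ≤ ENNReal.ofReal (exp (l * S ω))} := fun ω hω => by
    simp only [Set.mem_ofPred_eq] at hω ⊢
    gcongr
  have hne : ENNReal.ofReal (exp (l * t)) ≠ 0 := by simp [exp_pos]
  rw [exp_sub, ENNReal.ofReal_div_of_pos (exp_pos _),
    ENNReal.le_div_iff_mul_le (Or.inl hne) (Or.inl ENNReal.ofReal_ne_top), mul_comm]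
  exact (mul_le_mul_right (measure_mono hsub) _).trans (hmarkov.trans h)

lemma measure_le_abs_le_of_mem_subSet {p a : ℝ} (hS : Measurable S)
    (ha : a ∈ subSet μ (phi p) S) {l : ℝ} (hl : 0 < l) (t : ℝ) :
    μ {ω | t ≤ |S ω|} ≤ ENNReal.ofReal (2 * exp (phi p (a * l) - l * t)) := by
  have hpos := measure_le_le_exp_of_lintegral_exp_le (t := t) hS hl (ha.2 l)
  have hneg := measure_le_le_exp_of_lintegral_exp_le (t := t) hS.neg hl ((mem_subSet_neg_s8 ha).2 l)
  have hunion : {ω | t ≤ |S ω|} = {ω | t ≤ S ω} ∪ {ω | t ≤ (-S) ω} := by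
    ext ω
    simp [le_abs]
  calc μ {ω | t ≤ |S ω|} ≤ μ {ω | t ≤ S ω} + μ {ω | t ≤ (-S) ω} :=
        hunion ▸ measure_union_le _ _
    _ ≤ ENNReal.ofReal (exp (phi p (a * l) - l * t)) +
        ENNReal.ofReal (exp (phi p (a * l) - l * t)) := add_le_add hpos hneg
    _ = ENNReal.ofReal (2 * exp (phi p (a * l) - l * t)) := by
        rw [← ENNReal.ofReal_add (exp_nonneg _) (exp_nonneg _), two_mul]

lemma measure_mul_le_abs_le_of_mem_subSet {p q a : ℝ} (hpq : p.HolderConjugate q)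
    (hS : Measurable S) (ha : a ∈ subSet μ (phi p) S) (ha0 : 0 < a) {u : ℝ} (hu : 1 < u) :
    μ {ω | u * a ≤ |S ω|} ≤
      ENNReal.ofReal (2 * exp (-(u ^ q * (1 / q) - 1 / q + 1 / 2))) := by
  have h := measure_le_abs_le_of_mem_subSet hS ha
    (div_pos (rpow_pos_of_pos (one_pos.trans hu) (q - 1)) ha0) (u * a)
  have hl : u ^ (q - 1) / a * (u * a) = u ^ (q - 1) * u := by field_simp
  rwa [mul_div_cancel₀ _ ha0.ne', hl, phi_rpow_sub_one_sub_mul hpq hu] at h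

end Tail

lemma le_card_rpow_mul_of_rpow_le_sum {ι : Type*} {s : Finset ι} {x b r : ℝ} {y : ι → ℝ}
    (hx : 0 ≤ x) (hb : 0 ≤ b) (hr : 0 < r) (hy0 : ∀ i ∈ s, 0 ≤ y i) (hyb : ∀ i ∈ s, y i ≤ b)
    (h : x ^ r ≤ ∑ i ∈ s, y i ^ r) : x ≤ (s.card : ℝ) ^ (1 / r) * b := by
  have hsum : ∑ i ∈ s, y i ^ r ≤ s.card * b ^ r := by
    simpa using Finset.sum_le_sum fun i hi => rpow_le_rpow (hy0 i hi) (hyb i hi) hr.le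
  rw [← rpow_le_rpow_iff hx (by positivity) hr, mul_rpow (by positivity) hb,
    ← rpow_mul (by positivity), one_div_mul_cancel hr.ne', rpow_one]
  exact h.trans hsum

lemma one_lt_rpow_mul_div_of_rpow_inv_lt {x y c m : ℝ} (hx : 0 < x) (hy : 0 < y) (hc : 0 < c)
    (hm : (y / x) ^ c⁻¹ < m) : 1 < m ^ c * (x / y) := by
  have := rpow_lt_rpow (by positivity) hm hc
  rw [← rpow_mul (by positivity), inv_mul_cancel₀ hc.ne', rpow_one, div_lt_iff₀ hx] at this
  rwa [← mul_div_assoc, one_lt_div hy]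

theorem tail_bound_marcinkiewicz_zygmund_general
    {Ω : Type*} [MeasurableSpace Ω] (μ : Measure Ω) [IsProbabilityMeasure μ]
    (p q : ℝ) (hp : 1 < p) (hpq : 1 / p + 1 / q = 1)
    (r : ℝ) (hr : r = min p 2)
    (ξ : ℕ → Ω → ℝ) (hmeas : ∀ n, Measurable (ξ n))
    (b : ℝ) (hb : IsLUB {x : ℝ | ∃ n : ℕ, 1 ≤ n ∧ x = tau μ (phi p) (ξ n)} b)
    (hbpos : 0 < b)
    (hsubsum : ∀ n : ℕ, 1 ≤ n →
      (subSet μ (phi p) (fun ω => ∑ i ∈ Finset.Icc 1 n, ξ i ω)).Nonempty)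
    (hτ : ∀ n : ℕ, 1 ≤ n →
      tau μ (phi p) (fun ω => ∑ i ∈ Finset.Icc 1 n, ξ i ω) ^ r ≤
        ∑ i ∈ Finset.Icc 1 n, tau μ (phi p) (ξ i) ^ r)
    (s : ℝ) (hs0 : 0 < s) (hsr : s < r)
    (ε : ℝ) (hε : 0 < ε)
    (n : ℕ) (hn : (b / ε) ^ ((1 / s - 1 / r)⁻¹) < (n : ℝ)) :
    μ {ω | (n : ℝ) ^ (1 / s) * ε ≤ |∑ i ∈ Finset.Icc 1 n, ξ i ω|} ≤
      ENNReal.ofReal (2 * Real.exp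
        (-((n : ℝ) ^ (q * (1 / s - 1 / r)) * (1 / q) * (ε / b) ^ q - 1 / q + 1 / 2))) := by
  have hconj : p.HolderConjugate q := Real.holderConjugate_iff.mpr ⟨hp, by simpa using hpq⟩
  have hp0 : 0 < p := one_pos.trans hp
  have hr0 : 0 < r := hr ▸ lt_min hp0 two_pos
  have hc : 0 < 1 / s - 1 / r := sub_pos.mpr (one_div_lt_one_div_of_lt hs0 hsr)
  have hn0 : (0 : ℝ) < n := (rpow_pos_of_pos (div_pos hbpos hε) _).trans hn
  have hn1 : 1 ≤ n := Nat.one_le_iff_ne_zero.mpr (by rintro rfl; simp at hn0)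
  set a := (n : ℝ) ^ (1 / r) * b with ha_def
  have ha : a ∈ subSet μ (phi p) (fun ω => ∑ i ∈ Finset.Icc 1 n, ξ i ω) := by
    refine mem_subSet_of_le hp0 (tau_mem_subSet hp0 (hsubsum n hn1)) ?_
    have hτb : ∀ i ∈ Finset.Icc 1 n, tau μ (phi p) (ξ i) ≤ b :=
      fun i hi => hb.1 ⟨i, (Finset.mem_Icc.mp hi).1, rfl⟩
    simpa only [Nat.card_Icc, add_tsub_cancel_right] using
      le_card_rpow_mul_of_rpow_le_sum (tau_nonneg _ _) hbpos.le hr0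
        (fun i _ => tau_nonneg _ _) hτb (hτ n hn1)
  set u := (n : ℝ) ^ (1 / s - 1 / r) * (ε / b) with hu_def
  have hu : 1 < u := one_lt_rpow_mul_div_of_rpow_inv_lt hε hbpos hc hn
  have ht : (n : ℝ) ^ (1 / s) * ε = u * a := by
    rw [hu_def, ha_def, rpow_sub hn0]
    field_simp
  have huq : u ^ q = (n : ℝ) ^ (q * (1 / s - 1 / r)) * (ε / b) ^ q := by
    rw [hu_def, mul_rpow (by positivity) (by positivity), mul_comm q, rpow_mul hn0.le]
  have htail := measure_mul_le_abs_le_of_mem_subSet hconj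
    (Finset.measurable_sum _ fun i _ => hmeas i) ha (by positivity) hu
  rw [ht]
  convert htail using 6
  rw [huq]
  ring

/-- Quantitative tail bound of the Marcinkiewicz–Zygmund type proposition: with
`b = sup_{n≥1} τ_{φ_p}(ξ_n) > 0` and the norm inequality (2), one has for all
`0 < s < r`, `ε > 0` and `n > (b/ε)^{(1/s − 1/r)⁻¹}` that
`P(|∑_{i=1}^n ξ_i| ≥ n^{1/s} ε) ≤ 2 exp(−(n^{q(1/s−1/r)}(1/q)(ε/b)^q − 1/q + 1/2))`. -/
theorem tail_bound_marcinkiewicz_zygmund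
    {Ω : Type*} [MeasurableSpace Ω] (μ : Measure Ω) [IsProbabilityMeasure μ]
    (p q : ℝ) (hp : 1 < p) (hq : 1 < q) (hpq : 1 / p + 1 / q = 1)
    (r : ℝ) (hr : r = min p 2)
    (ξ : ℕ → Ω → ℝ) (hmeas : ∀ n, Measurable (ξ n))
    (hsub : ∀ n, (subSet μ (phi p) (ξ n)).Nonempty)
    (b : ℝ) (hb : IsLUB {x : ℝ | ∃ n : ℕ, 1 ≤ n ∧ x = tau μ (phi p) (ξ n)} b)
    (hbpos : 0 < b)
    (hsubsum : ∀ n : ℕ, 1 ≤ n →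
      (subSet μ (phi p) (fun ω => ∑ i ∈ Finset.Icc 1 n, ξ i ω)).Nonempty)
    (hτ : ∀ n : ℕ, 1 ≤ n →
      tau μ (phi p) (fun ω => ∑ i ∈ Finset.Icc 1 n, ξ i ω) ^ r ≤
        ∑ i ∈ Finset.Icc 1 n, tau μ (phi p) (ξ i) ^ r)
    (s : ℝ) (hs0 : 0 < s) (hsr : s < r)
    (ε : ℝ) (hε : 0 < ε)
    (n : ℕ) (hn1 : 1 ≤ n) (hn : (b / ε) ^ ((1 / s - 1 / r)⁻¹) < (n : ℝ)) :
    μ {ω | (n : ℝ) ^ (1 / s) * ε ≤ |∑ i ∈ Finset.Icc 1 n, ξ i ω|} ≤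
      ENNReal.ofReal (2 * Real.exp
        (-((n : ℝ) ^ (q * (1 / s - 1 / r)) * (1 / q) * (ε / b) ^ q - 1 / q + 1 / 2))) :=
  tail_bound_marcinkiewicz_zygmund_general μ p q hp hpq r hr ξ hmeas b hb hbpos hsubsum hτ s hs0 hsr
    ε hε n hn
end
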